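/- Let f : {0,1}^n → {0,1} be λ-critical for some λ ≥ 1 with n ≥ λ. Then D_ave(f) ≤ n(1 − 1/λ) + 2√(n/λ). -/

import Mathlib

/-- Decision trees over `n` boolean variables. -/
inductive DTree (n : ℕ) : Type where
  | leaf : Bool → DTree n
  | node : Fin n → DTree n → DTree n → DTree n

namespace DTree

/-- Evaluate a decision tree on an input. -/
def eval {n : ℕ} : DTree n → (Fin n → Bool) → Bool
  | leaf b, _ => b
  | node i t0 t1, x => if x i then eval t1 x else eval t0 x

/-- Number of queries made on input `x`. -/
def cost {n : ℕ} : DTree n → (Fin n → Bool) → ℕ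
  | leaf _, _ => 0
  | node i t0 t1, x => 1 + (if x i then cost t1 x else cost t0 x)

/-- Depth of a decision tree. -/
def depth {n : ℕ} : DTree n → ℕ
  | leaf _ => 0
  | node _ t0 t1 => 1 + max (depth t0) (depth t1)

end DTree

/-- `T` computes `f` with zero error. -/
def Computes {n : ℕ} (T : DTree n) (f : (Fin n → Bool) → Bool) : Prop :=
  ∀ x, T.eval x = f x

/-- Average cost of a decision tree under the uniform distribution. -/
noncomputable def avgCost {n : ℕ} (T : DTree n) : ℝ :=
  (∑ x : Fin n → Bool, (T.cost x : ℝ)) / 2 ^ n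

/-- Average-case deterministic query complexity under the uniform distribution. -/
noncomputable def Dave {n : ℕ} (f : (Fin n → Bool) → Bool) : ℝ :=
  sInf {c : ℝ | ∃ T : DTree n, Computes T f ∧ avgCost T = c}

/-- Worst-case deterministic query complexity. -/
noncomputable def Dworst {n : ℕ} (f : (Fin n → Bool) → Bool) : ℕ :=
  sInf {d : ℕ | ∃ T : DTree n, Computes T f ∧ T.depth = d}

/-- The weight of a boolean function: the number of inputs mapped to `true`. -/
def wt {n : ℕ} (f : (Fin n → Bool) → Bool) : ℕ :=
  (Finset.univ.filter fun x : Fin n → Bool => f x = true).card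

/-- `S` is a certificate of `f` on input `x`. -/
def IsCert {n : ℕ} (f : (Fin n → Bool) → Bool) (x : Fin n → Bool) (S : Finset (Fin n)) : Prop :=
  ∀ y : Fin n → Bool, (∀ i ∈ S, y i = x i) → f y = f x

/-- Certificate complexity of `f` on input `x`. -/
noncomputable def certC {n : ℕ} (f : (Fin n → Bool) → Bool) (x : Fin n → Bool) : ℕ :=
  sInf {k : ℕ | ∃ S : Finset (Fin n), IsCert f x S ∧ S.card = k}

/-- The weight of the subfunction `f|ρ`, where `ρ : Fin n → Option Bool` is a restriction:
the number of inputs consistent with `ρ` on which `f` outputs `true`. -/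
def wtR {n : ℕ} (f : (Fin n → Bool) → Bool) (ρ : Fin n → Option Bool) : ℕ :=
  (Finset.univ.filter fun x : Fin n → Bool =>
    f x = true ∧ ∀ i : Fin n, ∀ b : Bool, ρ i = some b → x i = b).card

/-- Number of coordinates fixed by a restriction. -/
def suppCard {n : ℕ} (ρ : Fin n → Option Bool) : ℕ :=
  (Finset.univ.filter fun i : Fin n => (ρ i).isSome).card

/-- The restriction given by the first `j` steps of a decision-tree path `L`. -/
def PathRho {n : ℕ} (L : List (Fin n × Bool)) (j : ℕ) : Fin n → Option Bool :=
  fun i => (L.take j).lookup i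

/-- The path `L` is `δ`-parity with respect to `f`. -/
def DeltaParityPath {n : ℕ} (f : (Fin n → Bool) → Bool) (δ : ℝ)
    (L : List (Fin n × Bool)) : Prop :=
  ∀ j : ℕ, 1 ≤ j → j ≤ L.length →
    (1/2) * (1 - δ) * (wtR f (PathRho L (j-1)) : ℝ) ≤ (wtR f (PathRho L j) : ℝ) ∧
    (wtR f (PathRho L j) : ℝ) ≤ (1/2) * (1 + δ) * (wtR f (PathRho L (j-1)) : ℝ)

/-- `f` is a `(t,δ)`-parity function: every path of length at most `t` is δ-parity. -/
def ParityFun {n : ℕ} (f : (Fin n → Bool) → Bool) (t : ℕ) (δ : ℝ) : Prop :=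
  ∀ L : List (Fin n × Bool), (L.map Prod.fst).Nodup → L.length ≤ t → DeltaParityPath f δ L

/-- The subfunction `f|ρ`, viewed as a function on the full cube. -/
def restrictFun {n : ℕ} (f : (Fin n → Bool) → Bool) (ρ : Fin n → Option Bool) :
    (Fin n → Bool) → Bool :=
  fun x => f fun i => (ρ i).getD (x i)

/-- Probability mass of the restriction `ρ` under the `p`-random restriction `R_p`. -/
noncomputable def rpMass {n : ℕ} (p : ℝ) (ρ : Fin n → Option Bool) : ℝ :=
  ∏ i : Fin n, if (ρ i).isSome then (1 - p) / 2 else p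

/-- `f` is `λ`-critical. -/
def IsCritical {n : ℕ} (lam : ℝ) (f : (Fin n → Bool) → Bool) : Prop :=
  ∀ p : ℝ, 0 ≤ p → p ≤ 1 → ∀ t : ℕ,
    (∑ ρ : Fin n → Option Bool,
      if t ≤ Dworst (restrictFun f ρ) then rpMass p ρ else 0) ≤ (p * lam) ^ t

/-
Fix `p` with `p λ < 1` and draw a set `S` of free coordinates, each coordinate free with
probability `p`. The tree `T_S` queries the coordinates outside `S` and then runs an optimal
tree for the resulting subfunction. Together with a uniform input, `S` induces exactly the
restriction `R_p`, so averaging the cost of `T_S` over the input and over `S` gives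
`D_ave(f) ≤ 𝔼 #fixed + 𝔼 D(f|ρ) = n (1 - p) + ∑_{t ≥ 1} Pr[D(f|ρ) ≥ t] ≤ n (1 - p) + pλ / (1 - pλ)`.
The choice `p λ = 1 - √(λ / n)` turns this into the bound.
-/

open Finset

section DecisionTrees

variable {n : ℕ}

theorem DTree.cost_le_depth (T : DTree n) (x : Fin n → Bool) : T.cost x ≤ T.depth := by
  induction T with
  | leaf b => simp [DTree.cost, DTree.depth]
  | node i t0 t1 h0 h1 =>
    simp only [DTree.cost, DTree.depth]
    cases x i <;> simp only [if_true, Bool.false_eq_true, if_false] <;> omega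

def fillOn (l : List (Fin n)) (x : Fin n → Bool) (ρ : Fin n → Option Bool) :
    Fin n → Option Bool :=
  fun i => if i ∈ l then some (x i) else ρ i

@[simp]
theorem fillOn_nil (x : Fin n → Bool) (ρ : Fin n → Option Bool) : fillOn [] x ρ = ρ := rfl

theorem fillOn_update (l : List (Fin n)) (i : Fin n) (x : Fin n → Bool)
    (ρ : Fin n → Option Bool) :
    fillOn l x (Function.update ρ i (some (x i))) = fillOn (i :: l) x ρ := by
  funext j
  by_cases hji : j = i
  · subst hji; simp [fillOn]
  · simp [fillOn, hji]

def DTree.queryThen (k : (Fin n → Option Bool) → DTree n) :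
    List (Fin n) → (Fin n → Option Bool) → DTree n
  | [], ρ => k ρ
  | i :: l, ρ => node i (queryThen k l (Function.update ρ i (some false)))
      (queryThen k l (Function.update ρ i (some true)))

namespace DTree

variable (k : (Fin n → Option Bool) → DTree n)

theorem eval_queryThen (l : List (Fin n)) (ρ : Fin n → Option Bool) (x : Fin n → Bool) :
    (queryThen k l ρ).eval x = (k (fillOn l x ρ)).eval x := by
  induction l generalizing ρ with
  | nil => simp [queryThen]
  | cons i l ih =>
    rw [← fillOn_update, ← ih]
    cases hx : x i <;> simp [queryThen, eval, hx]

theorem cost_queryThen (l : List (Fin n)) (ρ : Fin n → Option Bool) (x : Fin n → Bool) :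
    (queryThen k l ρ).cost x = l.length + (k (fillOn l x ρ)).cost x := by
  induction l generalizing ρ with
  | nil => simp [queryThen]
  | cons i l ih =>
    rw [← fillOn_update, List.length_cons, add_right_comm, ← ih]
    cases hx : x i <;> simp [queryThen, cost, hx, add_comm]

theorem depth_queryThen_le {B : ℕ} (hk : ∀ ρ, (k ρ).depth ≤ B) (l : List (Fin n))
    (ρ : Fin n → Option Bool) : (queryThen k l ρ).depth ≤ l.length + B := by
  induction l generalizing ρ with
  | nil => simpa [queryThen] using hk ρ
  | cons i l ih =>
    simp only [queryThen, depth, List.length_cons]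
    have := ih (Function.update ρ i (some false))
    have := ih (Function.update ρ i (some true))
    omega

end DTree

theorem exists_computes_depth_le (f : (Fin n → Bool) → Bool) :
    ∃ T : DTree n, Computes T f ∧ T.depth ≤ n := by
  let k : (Fin n → Option Bool) → DTree n := fun ρ => .leaf (f fun i => (ρ i).getD false)
  refine ⟨DTree.queryThen k (List.finRange n) fun _ => none, fun x => ?_, ?_⟩
  · simp [DTree.eval_queryThen, k, DTree.eval, fillOn]
  · simpa using DTree.depth_queryThen_le k (B := 0) (fun _ => le_rfl) (List.finRange n) _

theorem exists_computes_depth_eq_Dworst (f : (Fin n → Bool) → Bool) :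
    ∃ T : DTree n, Computes T f ∧ T.depth = Dworst f :=
  have ⟨T, hT, _⟩ := exists_computes_depth_le f
  Nat.sInf_mem (s := {d | ∃ T : DTree n, Computes T f ∧ T.depth = d}) ⟨_, T, hT, rfl⟩

theorem Dworst_le (f : (Fin n → Bool) → Bool) : Dworst f ≤ n := by
  obtain ⟨T, hT, hd⟩ := exists_computes_depth_le f
  exact (Nat.sInf_le ⟨T, hT, rfl⟩ : Dworst f ≤ T.depth).trans hd

theorem Dave_le_avgCost {f : (Fin n → Bool) → Bool} {T : DTree n} (h : Computes T f) :
    Dave f ≤ avgCost T :=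
  csInf_le ⟨0, fun _ ⟨T', _, hc⟩ => hc ▸ by unfold avgCost; positivity⟩ ⟨T, h, rfl⟩

end DecisionTrees

section ProductWeights

variable {ι α R : Type*} [Fintype ι] [DecidableEq ι] [Fintype α] [CommSemiring R]

theorem Fintype.sum_prod_mul_comp {β : Type*} [Fintype β] [DecidableEq β] (w : α → R)
    (φ : α → β) (G : (ι → β) → R) :
    ∑ g : ι → α, (∏ i, w (g i)) * G (φ ∘ g) =
      ∑ h : ι → β, (∏ i, ∑ a with φ a = h i, w a) * G h := by
  rw [← Finset.sum_fiberwise univ (φ ∘ ·)]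
  refine Finset.sum_congr rfl fun h _ => ?_
  have hfiber : univ.filter (fun g : ι → α => φ ∘ g = h) =
      Fintype.piFinset fun i => univ.filter fun a => φ a = h i := by
    ext g; simp [Fintype.mem_piFinset, funext_iff]
  rw [Finset.prod_univ_sum, ← hfiber, sum_mul]
  exact Finset.sum_congr rfl fun g hg => by rw [(mem_filter.1 hg).2]

theorem Fintype.sum_prod_mul_apply (w : α → R) (hw : ∑ a, w a = 1) (v : α → R) (i : ι) :
    ∑ g : ι → α, (∏ j, w (g j)) * v (g i) = ∑ a, w a * v a := by
  have hsplit : ∀ g : ι → α,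
      (∏ j, w (g j)) * v (g i) = ∏ j, w (g j) * (if j = i then v (g j) else 1) := by
    intro g; rw [prod_mul_distrib, prod_ite_eq']
  rw [Finset.sum_congr rfl fun g _ => hsplit g,
    ← Fintype.prod_sum fun j a => w a * if j = i then v a else 1]
  simp_rw [mul_ite, mul_one, Finset.sum_ite_irrel, hw]
  simp

end ProductWeights

theorem Nat.cast_eq_sum_Icc_ite_le {R : Type*} [AddCommMonoidWithOne R] {d N : ℕ}
    (h : d ≤ N) : (d : R) = ∑ t ∈ Icc 1 N, if t ≤ d then 1 else 0 := by
  rw [sum_boole, filter_congr_decidable]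
  have : (Icc 1 N).filter (· ≤ d) = Icc 1 d := by
    ext t; simp only [mem_filter, mem_Icc]; omega
  simp [this]

section RandomRestrictions

variable {n : ℕ}

def restrictOf (s x : Fin n → Bool) : Fin n → Option Bool :=
  fun i => if s i then none else some (x i)

/-- Query the coordinates fixed by `s`, then run an optimal tree for the subfunction. -/
theorem Dave_le_avg_suppCard_add_Dworst (f : (Fin n → Bool) → Bool) (s : Fin n → Bool) :
    Dave f ≤ (∑ x, ((suppCard (restrictOf s x) + Dworst (restrictFun f (restrictOf s x)) : ℕ)
      : ℝ)) / 2 ^ n := by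
  choose opt hopt using fun ρ => exists_computes_depth_eq_Dworst (restrictFun f ρ)
  let l := (univ.filter fun i => s i = false).toList
  let T := DTree.queryThen opt l fun _ => none
  have hfill : ∀ x, fillOn l x (fun _ => none) = restrictOf s x := by
    intro x; funext i; cases h : s i <;> simp [fillOn, restrictOf, l, h]
  have hlen : ∀ x, l.length = suppCard (restrictOf s x) := by
    intro x; simp [l, suppCard, restrictOf]
  have hT : Computes T f := by
    intro x
    rw [DTree.eval_queryThen, hfill, (hopt _).1]
    simp only [restrictFun, restrictOf]
    congr; funext i; cases s i <;> rfl
  refine (Dave_le_avgCost hT).trans (div_le_div_of_nonneg_right ?_ (by positivity))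
  gcongr with x
  rw [DTree.cost_queryThen, hfill, hlen, ← (hopt _).2]
  exact Nat.add_le_add_left (DTree.cost_le_depth _ x) _

/-- The probability that the set of free coordinates of `R_p` is `{i | s i}`. -/
noncomputable def freeMass (p : ℝ) (s : Fin n → Bool) : ℝ :=
  ∏ i, if s i then p else 1 - p

theorem freeMass_nonneg {p : ℝ} (hp0 : 0 ≤ p) (hp1 : p ≤ 1) (s : Fin n → Bool) :
    0 ≤ freeMass p s :=
  prod_nonneg fun i _ => by split <;> linarith

theorem sum_freeMass (p : ℝ) : ∑ s : Fin n → Bool, freeMass p s = 1 := by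
  unfold freeMass
  rw [← Fintype.sum_pow fun b : Bool => if b then p else 1 - p]
  simp

/-- Sampling the free set with `freeMass` and the fixed values uniformly yields `R_p`. -/
theorem sum_freeMass_mul_avg (p : ℝ) (G : (Fin n → Option Bool) → ℝ) :
    ∑ s, freeMass p s * ((∑ x, G (restrictOf s x)) / 2 ^ n) = ∑ ρ, rpMass p ρ * G ρ := by
  let w : Bool × Bool → ℝ := fun ab => (if ab.1 then p else 1 - p) / 2
  let φ : Bool × Bool → Option Bool := fun ab => if ab.1 then none else some ab.2
  have hpair : ∀ s x : Fin n → Bool, freeMass p s / 2 ^ n = ∏ i, w (s i, x i) := by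
    intro s x
    simp [w, freeMass, prod_div_distrib]
  have hcoord : ∀ o : Option Bool,
      ∑ ab with φ ab = o, w ab = if o.isSome then (1 - p) / 2 else p := by
    rintro (_ | _ | _) <;> simp [w, φ, Finset.sum_filter, Fintype.sum_prod_type]
  calc ∑ s, freeMass p s * ((∑ x, G (restrictOf s x)) / 2 ^ n)
      = ∑ s : Fin n → Bool, ∑ x : Fin n → Bool,
          (∏ i, w (s i, x i)) * G (φ ∘ fun i => (s i, x i)) := by
        simp_rw [← hpair, mul_div_assoc', div_mul_eq_mul_div, mul_sum, sum_div]
        rfl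
    _ = ∑ g : Fin n → Bool × Bool, (∏ i, w (g i)) * G (φ ∘ g) := by
        rw [← Fintype.sum_prod_type',
          ← (Equiv.arrowProdEquivProdArrow (Fin n) (fun _ => Bool) (fun _ => Bool)).symm.sum_comp]
        rfl
    _ = ∑ ρ, rpMass p ρ * G ρ := by
        rw [Fintype.sum_prod_mul_comp]; simp_rw [hcoord]; rfl

theorem sum_rpMass_mul_suppCard (p : ℝ) :
    ∑ ρ : Fin n → Option Bool, rpMass p ρ * suppCard ρ = n * (1 - p) := by
  let c : Option Bool → ℝ := fun o => if o.isSome then (1 - p) / 2 else p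
  have hc : ∑ o, c o = 1 := by simp [c, Fintype.sum_option]; ring
  have hfixed : ∀ i : Fin n, ∑ ρ : Fin n → Option Bool,
      rpMass p ρ * (if (ρ i).isSome then 1 else 0) = 1 - p := by
    intro i
    have hmean : ∑ o, c o * (if o.isSome then 1 else 0) = 1 - p := by
      simp [c, Fintype.sum_option]; ring
    rw [← hmean]
    exact Fintype.sum_prod_mul_apply c hc (fun o => if o.isSome then 1 else 0) i
  simp_rw [suppCard, card_filter, Nat.cast_sum, mul_sum]
  rw [sum_comm]
  simp_rw [Nat.cast_ite, Nat.cast_one, Nat.cast_zero, hfixed]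
  simp; ring

end RandomRestrictions

section Criticality

variable {n : ℕ} {lam p : ℝ} {f : (Fin n → Bool) → Bool}

theorem sum_rpMass_mul_Dworst_le (hc : IsCritical lam f) (hp0 : 0 ≤ p) (hp1 : p ≤ 1) :
    ∑ ρ, rpMass p ρ * Dworst (restrictFun f ρ) ≤ ∑ t ∈ Icc 1 n, (p * lam) ^ t := by
  simp_rw [Nat.cast_eq_sum_Icc_ite_le (R := ℝ) (Dworst_le (restrictFun f _)), mul_sum,
    mul_ite, mul_one, mul_zero]
  rw [sum_comm]
  exact sum_le_sum fun t _ => hc p hp0 hp1 t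

theorem Dave_le_of_isCritical (hc : IsCritical lam f) (hp0 : 0 ≤ p) (hp1 : p ≤ 1)
    (hq0 : 0 ≤ p * lam) (hq1 : p * lam < 1) :
    Dave f ≤ n * (1 - p) + p * lam / (1 - p * lam) := by
  let G : (Fin n → Option Bool) → ℝ := fun ρ => (suppCard ρ + Dworst (restrictFun f ρ) : ℕ)
  calc Dave f = ∑ s, freeMass p s * Dave f := by rw [← sum_mul, sum_freeMass, one_mul]
    _ ≤ ∑ s, freeMass p s * ((∑ x, G (restrictOf s x)) / 2 ^ n) :=
        sum_le_sum fun s _ => mul_le_mul_of_nonneg_left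
          (Dave_le_avg_suppCard_add_Dworst f s) (freeMass_nonneg hp0 hp1 s)
    _ = ∑ ρ, rpMass p ρ * G ρ := sum_freeMass_mul_avg p G
    _ = n * (1 - p) + ∑ ρ, rpMass p ρ * Dworst (restrictFun f ρ) := by
        simp only [G, Nat.cast_add, mul_add, sum_add_distrib, sum_rpMass_mul_suppCard]
    _ ≤ n * (1 - p) + ∑ t ∈ Icc 1 n, (p * lam) ^ t := by
        gcongr; exact sum_rpMass_mul_Dworst_le hc hp0 hp1
    _ ≤ n * (1 - p) + p * lam / (1 - p * lam) := by
        gcongr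
        simpa [Finset.Ico_add_one_right_eq_Icc] using
          geom_sum_Ico_le_of_lt_one (m := 1) (n := n + 1) hq0 hq1

end Criticality

theorem stmt12 (n : ℕ) (lam : ℝ) (f : (Fin n → Bool) → Bool)
    (hlam : 1 ≤ lam) (hn : lam ≤ n) (hc : IsCritical lam f) :
    Dave f ≤ n * (1 - 1 / lam) + 2 * Real.sqrt (n / lam) := by
  have hlam0 : 0 < lam := by linarith
  set u := Real.sqrt (n / lam)
  have hu1 : 1 ≤ u := Real.one_le_sqrt.mpr ((one_le_div hlam0).mpr hn)
  have hn_eq : (n : ℝ) = u ^ 2 * lam := by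
    rw [Real.sq_sqrt (by positivity), div_mul_cancel₀ _ hlam0.ne']
  have hinv0 : 0 < u⁻¹ := by positivity
  have hinv1 : u⁻¹ ≤ 1 := inv_le_one_of_one_le₀ hu1
  -- `p λ = 1 - 1 / u` balances the two terms `n (1 - p)` and `p λ / (1 - p λ)`.
  have hq : (1 - u⁻¹) / lam * lam = 1 - u⁻¹ := div_mul_cancel₀ _ hlam0.ne'
  have hbound := Dave_le_of_isCritical hc (p := (1 - u⁻¹) / lam)
    (div_nonneg (by linarith) hlam0.le) ((div_le_one hlam0).mpr (by linarith))
    (by rw [hq]; linarith) (by rw [hq]; linarith)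
  refine hbound.trans (le_of_eq_of_le ?_ (by linarith : n * (1 - 1 / lam) + 2 * u - 1 ≤ _))
  rw [hq]
  field_simp
  rw [hn_eq]
  ring
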